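/- arXiv:2408.13490 — 5 statements merged into one kernel-verified Lean document; each statement's English description precedes it below -/
import Mathlib

section
/- Let x_{ij}, 1 ≤ i,j ≤ n, be independent complex random variables with mean 0, unit variance, satisfying the Lindeberg condition. Let N_n = #{(i,j) : |x_{ij}| > n^{3/4}}. Then there exists a constant b > 0 such that for all sufficiently large n, P(N_n > n^{3/4}) ≤ 2 e^{−b n^{3/4}}. -/
/-!
An entry exceeds `a = n^{3/4} ≥ √n` with probability at most `a⁻² E[|x_ij|² 1(|x_ij| > √n)]`
(Markov), so the Lindeberg condition makes the expected number of large entries at most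
`n² o(1) / a² ≤ a / 4` for large `n`. That number `N_n` is a sum of independent indicators
`1_{E_ij}`, and `E[e^{t 1_E}] = 1 + (e^t - 1) P(E) ≤ exp ((e^t - 1) P(E))`, so the Chernoff bound
at `t = 1` gives `P(N_n ≥ a) ≤ exp (-a + (e - 1) a / 4) ≤ exp (-a / 2)`.
-/

open MeasureTheory ProbabilityTheory Filter Finset

namespace ProbabilityTheory

open Real

lemma exp_mul_indicator_one {Ω : Type*} (E : Set Ω) (t : ℝ) (ω : Ω) :
    exp (t * E.indicator (fun _ => (1 : ℝ)) ω) = 1 + E.indicator (fun _ => exp t - 1) ω := by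
  by_cases h : ω ∈ E <;> simp [h]

variable {Ω ι : Type*} [MeasurableSpace Ω] {μ : Measure Ω}

lemma integrable_exp_mul_indicator_one [IsFiniteMeasure μ] {E : Set Ω} (hE : MeasurableSet E)
    (t : ℝ) : Integrable (fun ω => exp (t * E.indicator (fun _ => (1 : ℝ)) ω)) μ := by
  simp_rw [exp_mul_indicator_one]
  exact (integrable_const 1).add ((integrable_const _).indicator hE)

lemma mgf_indicator_one [IsProbabilityMeasure μ] {E : Set Ω} (hE : MeasurableSet E) (t : ℝ) :
    mgf (E.indicator fun _ => (1 : ℝ)) μ t = 1 + (exp t - 1) * μ.real E := by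
  simp_rw [mgf, exp_mul_indicator_one]
  rw [integral_add (integrable_const 1) ((integrable_const _).indicator hE),
    integral_const, integral_indicator_const _ hE]
  simp [mul_comm]

lemma mgf_indicator_one_le [IsProbabilityMeasure μ] {E : Set Ω} (hE : MeasurableSet E) (t : ℝ) :
    mgf (E.indicator fun _ => (1 : ℝ)) μ t ≤ exp ((exp t - 1) * μ.real E) := by
  rw [mgf_indicator_one hE, add_comm]
  exact add_one_le_exp _

open Classical in
lemma measureReal_card_mem_ge_le_exp [IsProbabilityMeasure μ] {E : ι → Set Ω}
    (hE : ∀ i, MeasurableSet (E i)) (hind : iIndepFun (fun i => (E i).indicator fun _ => (1 : ℝ)) μ)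
    (s : Finset ι) {t : ℝ} (ht : 0 ≤ t) (a : ℝ) :
    μ.real {ω | a ≤ #{i ∈ s | ω ∈ E i}} ≤
      exp (-t * a + (exp t - 1) * ∑ i ∈ s, μ.real (E i)) := by
  have hmeas : ∀ i, Measurable ((E i).indicator fun _ => (1 : ℝ)) :=
    fun i => measurable_const.indicator (hE i)
  have hcount : ∀ ω, (#{i ∈ s | ω ∈ E i} : ℝ) = (∑ i ∈ s, (E i).indicator fun _ => (1 : ℝ)) ω :=
    fun ω => by simp [Finset.sum_apply, Set.indicator_apply]
  simp_rw [hcount]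
  calc _ ≤ exp (-t * a) * mgf (∑ i ∈ s, (E i).indicator fun _ => (1 : ℝ)) μ t :=
        measure_ge_le_exp_mul_mgf a ht
          (hind.integrable_exp_mul_sum hmeas fun i _ => integrable_exp_mul_indicator_one (hE i) t)
    _ ≤ exp (-t * a) * ∏ i ∈ s, exp ((exp t - 1) * μ.real (E i)) := by
        rw [hind.mgf_sum hmeas]
        gcongr with i
        exacts [fun i _ => mgf_nonneg, mgf_indicator_one_le (hE i) t]
    _ = _ := by rw [← exp_sum, ← exp_add, mul_sum]

variable {E : Type*} [NormedAddCommGroup E] [MeasurableSpace E] [OpensMeasurableSpace E]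

lemma sq_mul_measureReal_lt_norm_le_integral [IsFiniteMeasure μ] {X : Ω → E} (hX : Measurable X)
    (hX2 : Integrable (fun ω => ‖X ω‖ ^ 2) μ) {c a : ℝ} (hca : c ≤ a) (ha : 0 ≤ a) :
    a ^ 2 * μ.real {ω | a < ‖X ω‖} ≤
      ∫ ω, ‖X ω‖ ^ 2 * (if c < ‖X ω‖ then (1 : ℝ) else 0) ∂μ := by
  set f := fun ω => ‖X ω‖ ^ 2 * (if c < ‖X ω‖ then (1 : ℝ) else 0)
  have hf_int : Integrable f μ := by
    refine hX2.mono' ?_ (ae_of_all _ fun ω => ?_)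
    · exact (hX.norm.pow_const 2).mul
        (measurable_const.ite (measurableSet_lt measurable_const hX.norm) measurable_const)
        |>.aestronglyMeasurable
    · simp only [f]
      split_ifs <;> simp
  have hsub : {ω | a < ‖X ω‖} ⊆ {ω | a ^ 2 ≤ f ω} := fun ω (hω : a < ‖X ω‖) => by
    simp only [Set.mem_ofPred_eq, f, if_pos (hca.trans_lt hω), mul_one]
    exact pow_le_pow_left₀ ha hω.le 2
  calc a ^ 2 * μ.real {ω | a < ‖X ω‖} ≤ a ^ 2 * μ.real {ω | a ^ 2 ≤ f ω} :=
        mul_le_mul_of_nonneg_left (measureReal_mono hsub) (sq_nonneg a)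
    _ ≤ ∫ ω, f ω ∂μ :=
        mul_meas_ge_le_integral_of_nonneg (ae_of_all _ fun ω => by positivity) hf_int _

noncomputable def lindebergSum (μ : Measure Ω) (x : ℕ → ℕ → Ω → E) (η : ℝ) (n : ℕ) : ℝ :=
  (1 / (n : ℝ) ^ 2) * ∑ i ∈ range n, ∑ j ∈ range n,
    ∫ ω, ‖x i j ω‖ ^ 2 * (if η * √n < ‖x i j ω‖ then (1 : ℝ) else 0) ∂μ

section Lindeberg

variable [IsFiniteMeasure μ] {x : ℕ → ℕ → Ω → E} (hmeas : ∀ i j, Measurable (x i j))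
  (hint2 : ∀ i j, Integrable (fun ω => ‖x i j ω‖ ^ 2) μ)
include hmeas hint2

lemma sq_mul_sum_measureReal_lt_norm_le_lindebergSum {η a : ℝ} {n : ℕ} (hna : η * √n ≤ a)
    (ha : 0 ≤ a) :
    a ^ 2 * ∑ i ∈ range n, ∑ j ∈ range n, μ.real {ω | a < ‖x i j ω‖} ≤
      n ^ 2 * lindebergSum μ x η n := by
  have hsum : (n : ℝ) ^ 2 * lindebergSum μ x η n = ∑ i ∈ range n, ∑ j ∈ range n,
      ∫ ω, ‖x i j ω‖ ^ 2 * (if η * √n < ‖x i j ω‖ then (1 : ℝ) else 0) ∂μ := by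
    rcases n.eq_zero_or_pos with rfl | hn
    · simp
    · rw [lindebergSum, ← mul_assoc, mul_one_div_cancel (by positivity), one_mul]
  rw [hsum, mul_sum]
  refine sum_le_sum fun i _ => ?_
  rw [mul_sum]
  exact sum_le_sum fun j _ =>
    sq_mul_measureReal_lt_norm_le_integral (hmeas i j) (hint2 i j) hna ha

lemma eventually_sum_measureReal_lt_norm_le (hL : Tendsto (lindebergSum μ x 1) atTop (nhds 0))
    {ε : ℝ} (hε : 0 < ε) :
    ∀ᶠ n : ℕ in atTop, ∑ i ∈ range n, ∑ j ∈ range n,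
      μ.real {ω | (n : ℝ) ^ ((3 : ℝ) / 4) < ‖x i j ω‖} ≤ ε * (n : ℝ) ^ ((3 : ℝ) / 4) := by
  filter_upwards [hL.eventually (ge_mem_nhds hε), eventually_ge_atTop 1] with n hLn hn
  have hn1 : (1 : ℝ) ≤ n := by exact_mod_cast hn
  set a := (n : ℝ) ^ ((3 : ℝ) / 4)
  have ha : 0 < a := by positivity
  have hsqrt : 1 * √n ≤ a := by
    rw [one_mul, sqrt_eq_rpow]
    exact rpow_le_rpow_of_exponent_le hn1 (by norm_num)
  have hn2 : (n : ℝ) ^ 2 ≤ a ^ 3 := by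
    rw [← rpow_natCast, ← rpow_natCast, ← rpow_mul (by positivity)]
    exact rpow_le_rpow_of_exponent_le hn1 (by norm_num)
  refine le_of_mul_le_mul_left ?_ (pow_pos ha 2)
  calc a ^ 2 * _ ≤ n ^ 2 * lindebergSum μ x 1 n :=
        sq_mul_sum_measureReal_lt_norm_le_lindebergSum hmeas hint2 hsqrt ha.le
    _ ≤ n ^ 2 * ε := by gcongr
    _ ≤ a ^ 3 * ε := by gcongr
    _ = a ^ 2 * (ε * a) := by ring

end Lindeberg

end ProbabilityTheory

theorem stmt_6_general {Ω : Type*} [MeasureSpace Ω] [IsProbabilityMeasure (ℙ : Measure Ω)]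
    (x : ℕ → ℕ → Ω → ℂ)
    (hmeas : ∀ i j, Measurable (x i j))
    (hindep : iIndepFun (fun p : ℕ × ℕ => x p.1 p.2) ℙ)
    (hint2 : ∀ i j, Integrable (fun ω => ‖x i j ω‖ ^ 2) ℙ)
    (hLind : ∀ η : ℝ, 0 < η →
      Tendsto (fun n : ℕ => (1 / (n : ℝ) ^ 2) * ∑ i ∈ range n, ∑ j ∈ range n,
          ∫ ω, ‖x i j ω‖ ^ 2 * (if η * Real.sqrt n < ‖x i j ω‖ then (1:ℝ) else 0) ∂ℙ)
        atTop (nhds 0)) :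
    ∃ b : ℝ, 0 < b ∧ ∃ N : ℕ, ∀ n ≥ N,
      ℙ {ω | (n : ℝ) ^ ((3:ℝ)/4) <
          (((range n ×ˢ range n).filter
            (fun p => (n : ℝ) ^ ((3:ℝ)/4) < ‖x p.1 p.2 ω‖)).card : ℝ)}
        ≤ ENNReal.ofReal (2 * Real.exp (-b * (n : ℝ) ^ ((3:ℝ)/4))) := by
  classical
  obtain ⟨N, hN⟩ := eventually_atTop.mp <|
    eventually_sum_measureReal_lt_norm_le hmeas hint2 (hLind 1 one_pos) (ε := 1 / 4) (by norm_num)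
  refine ⟨1 / 2, by norm_num, N, fun n hn => ?_⟩
  set a := (n : ℝ) ^ ((3 : ℝ) / 4)
  set E : ℕ × ℕ → Set Ω := fun p => x p.1 p.2 ⁻¹' {z | a < ‖z‖}
  have hE : ∀ p, MeasurableSet (E p) := fun p =>
    (hmeas p.1 p.2) (measurableSet_lt measurable_const measurable_norm)
  have hind : iIndepFun (fun p => (E p).indicator fun _ => (1 : ℝ)) ℙ :=
    hindep.comp (fun _ => {z : ℂ | a < ‖z‖}.indicator fun _ => (1 : ℝ)) fun _ =>
      measurable_const.indicator (measurableSet_lt measurable_const measurable_norm)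
  have htail : ∑ p ∈ range n ×ˢ range n, (ℙ : Measure Ω).real (E p) ≤ 1 / 4 * a := by
    rw [sum_product]
    exact hN n hn
  have htail0 : 0 ≤ ∑ p ∈ range n ×ˢ range n, (ℙ : Measure Ω).real (E p) :=
    sum_nonneg fun _ _ => measureReal_nonneg
  have he : Real.exp 1 - 1 ≤ 2 := by linarith [Real.exp_one_lt_d9]
  calc _ ≤ ℙ {ω | a ≤ #{p ∈ range n ×ˢ range n | ω ∈ E p}} := measure_mono fun ω hω => by
        simpa only [E, Set.mem_preimage, Set.mem_ofPred_eq] using hω.le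
    _ = ENNReal.ofReal ((ℙ : Measure Ω).real {ω | a ≤ #{p ∈ range n ×ˢ range n | ω ∈ E p}}) :=
        (ofReal_measureReal (measure_ne_top _ _)).symm
    _ ≤ _ := by
      refine ENNReal.ofReal_le_ofReal <|
        (measureReal_card_mem_ge_le_exp hE hind _ zero_le_one a).trans ?_
      calc _ ≤ Real.exp (-(1 / 2) * a) := Real.exp_le_exp.mpr (by nlinarith)
        _ ≤ _ := by linarith [Real.exp_pos (-(1 / 2) * a)]

/-- Let `N_n = #{(i,j) : i,j ≤ n, |x_{ij}| > n^{3/4}}`.  There is a constant `b > 0` such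
that for all large `n`, `P(N_n > n^{3/4}) ≤ 2 exp(−b n^{3/4})`. -/
theorem stmt_6 {Ω : Type*} [MeasureSpace Ω] [IsProbabilityMeasure (ℙ : Measure Ω)]
    (x : ℕ → ℕ → Ω → ℂ)
    (hmeas : ∀ i j, Measurable (x i j))
    (hindep : iIndepFun (fun p : ℕ × ℕ => x p.1 p.2) ℙ)
    (hint : ∀ i j, Integrable (x i j) ℙ)
    (hmean : ∀ i j, ∫ ω, x i j ω ∂ℙ = 0)
    (hint2 : ∀ i j, Integrable (fun ω => ‖x i j ω‖ ^ 2) ℙ)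
    (hvar : ∀ i j, ∫ ω, ‖x i j ω‖ ^ 2 ∂ℙ = 1)
    (hLind : ∀ η : ℝ, 0 < η →
      Tendsto (fun n : ℕ => (1 / (n : ℝ) ^ 2) * ∑ i ∈ range n, ∑ j ∈ range n,
          ∫ ω, ‖x i j ω‖ ^ 2 * (if η * Real.sqrt n < ‖x i j ω‖ then (1:ℝ) else 0) ∂ℙ)
        atTop (nhds 0)) :
    ∃ b : ℝ, 0 < b ∧ ∃ N : ℕ, ∀ n ≥ N,
      ℙ {ω | (n : ℝ) ^ ((3:ℝ)/4) <
          (((range n ×ˢ range n).filter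
            (fun p => (n : ℝ) ^ ((3:ℝ)/4) < ‖x p.1 p.2 ω‖)).card : ℝ)}
        ≤ ENNReal.ofReal (2 * Real.exp (-b * (n : ℝ) ^ ((3:ℝ)/4))) :=
  stmt_6_general x hmeas hindep hint2 hLind
end

section
/- Let x_{ij}, 1 ≤ i,j ≤ n, be independent complex random variables with mean 0 and unit variance, bounded by n^{3/4} after truncation, and define S_{n2} = (1/n²) Σ_{i,j} |x_{ij}|² I(|x_{ij}| ≤ n^{3/4}). Then E[(S_{n2} − E S_{n2})^6] = O(n^{−3/2}). -/
/-!
The centred truncated summands `y_{ij} = z_{ij} - E z_{ij}`, where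
`z_{ij} = |x_{ij}|² 𝟙(|x_{ij}| ≤ n^{3/4})`, are independent, centred, bounded by `M = n^{3/2}`,
and have variance at most `n^{3/2} E z_{ij} ≤ n^{3/2} =: v`. For a sum of `N` such variables,
expanding `E (X + T)^m` binomially and using independence and `E X = E T = 0`, induction on the
number of summands gives `E (∑ y)^6 ≤ 15 N³ v³ + 25 N² M² v² + N M⁴ v`. With `N = n²` and the
normalisation `n⁻²` the dominant term is `15 n^{-3/2}`.
-/

open MeasureTheory ProbabilityTheory Finset

section Moments

variable {Ω : Type*} [MeasurableSpace Ω] {μ : Measure Ω}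

lemma integrable_of_abs_le [IsFiniteMeasure μ] {f : Ω → ℝ} (hf : Measurable f) {C : ℝ}
    (hC : ∀ ω, |f ω| ≤ C) : Integrable f μ :=
  .of_bound hf.aestronglyMeasurable C (.of_forall hC)

lemma ProbabilityTheory.IndepFun.integral_add_pow [IsFiniteMeasure μ] {X Y : Ω → ℝ}
    (hXY : IndepFun X Y μ) (hX : Measurable X) (hY : Measurable Y) {A B : ℝ} (hXA : ∀ ω, |X ω| ≤ A)
    (hYB : ∀ ω, |Y ω| ≤ B) (m : ℕ) :
    ∫ ω, (X ω + Y ω) ^ m ∂μ =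
      ∑ k ∈ range (m + 1),
        (∫ ω, X ω ^ k ∂μ) * (∫ ω, Y ω ^ (m - k) ∂μ) * m.choose k := by
  have hint : ∀ k l : ℕ, Integrable (fun ω => X ω ^ k * Y ω ^ l) μ := fun k l =>
    integrable_of_abs_le ((hX.pow_const k).mul (hY.pow_const l)) (C := A ^ k * B ^ l)
      fun ω => by
        rw [abs_mul, abs_pow, abs_pow]
        exact mul_le_mul (pow_le_pow_left₀ (abs_nonneg _) (hXA ω) k)
          (pow_le_pow_left₀ (abs_nonneg _) (hYB ω) l) (by positivity)
          ((abs_nonneg _).trans (hXA ω) |> (pow_nonneg · k))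
  simp_rw [add_pow]
  rw [integral_finsetSum _ fun k _ => (hint k (m - k)).mul_const _]
  refine sum_congr rfl fun k _ => ?_
  rw [integral_mul_const]
  exact congrArg (· * _) <| (hXY.comp (measurable_id.pow_const k)
    (measurable_id.pow_const (m - k))).integral_fun_mul_eq_mul_integral
      (hX.pow_const k).aestronglyMeasurable (hY.pow_const (m - k)).aestronglyMeasurable

lemma abs_integral_pow_add_two_le [IsProbabilityMeasure μ] {X : Ω → ℝ} (hX : Measurable X)
    {M v : ℝ} (hXM : ∀ ω, |X ω| ≤ M) (hXv : ∫ ω, X ω ^ 2 ∂μ ≤ v) (q : ℕ) :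
    |∫ ω, X ω ^ (q + 2) ∂μ| ≤ M ^ q * v := by
  have hM : 0 ≤ M := (abs_nonneg _).trans (hXM (nonempty_of_isProbabilityMeasure μ).some)
  have hX2 : Integrable (fun ω => X ω ^ 2) μ :=
    integrable_of_abs_le (hX.pow_const 2) (C := M ^ 2) fun ω => by
      rw [abs_pow]; exact pow_le_pow_left₀ (abs_nonneg _) (hXM ω) 2
  calc |∫ ω, X ω ^ (q + 2) ∂μ| ≤ ∫ ω, |X ω| ^ q * X ω ^ 2 ∂μ := by
        refine (abs_integral_le_integral_abs).trans_eq (integral_congr_ae (.of_forall fun ω => ?_))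
        simp only [pow_add, abs_mul, abs_pow, sq_abs]
    _ ≤ ∫ ω, M ^ q * X ω ^ 2 ∂μ := by
        refine integral_mono_of_nonneg (.of_forall fun ω => by positivity) (hX2.const_mul _)
          (.of_forall fun ω => ?_)
        exact mul_le_mul_of_nonneg_right (pow_le_pow_left₀ (abs_nonneg _) (hXM ω) q)
          (sq_nonneg _)
    _ = M ^ q * ∫ ω, X ω ^ 2 ∂μ := integral_const_mul _ _
    _ ≤ M ^ q * v := mul_le_mul_of_nonneg_left hXv (pow_nonneg hM q)

variable [IsProbabilityMeasure μ] {ι : Type*} {y : ι → Ω → ℝ} {M v : ℝ}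

lemma integral_sum_cons_pow (hmeas : ∀ i, Measurable (y i)) (hindep : iIndepFun y μ)
    (hbd : ∀ i ω, |y i ω| ≤ M) {a : ι} {s : Finset ι} (ha : a ∉ s) (m : ℕ) :
    ∫ ω, (∑ i ∈ cons a s ha, y i ω) ^ m ∂μ =
      ∑ k ∈ range (m + 1),
        (∫ ω, y a ω ^ k ∂μ) * (∫ ω, (∑ i ∈ s, y i ω) ^ (m - k) ∂μ)
          * m.choose k := by
  have hindep' : IndepFun (y a) (fun ω => ∑ i ∈ s, y i ω) μ := by
    simpa only [sum_fn] using (hindep.indepFun_finsetSum_of_notMem hmeas ha).symm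
  have hsum_bd : ∀ ω, |∑ i ∈ s, y i ω| ≤ #s * M := fun ω =>
    (abs_sum_le_sum_abs _ _).trans <| by simpa using sum_le_card_nsmul s _ M fun i _ => hbd i ω
  simp only [sum_cons]
  exact hindep'.integral_add_pow (hmeas a) (s.measurable_fun_sum fun i _ => hmeas i)
    (hbd a) hsum_bd m

lemma integral_sum_eq_zero (hmeas : ∀ i, Measurable (y i)) (hbd : ∀ i ω, |y i ω| ≤ M)
    (hmean : ∀ i, ∫ ω, y i ω ∂μ = 0) (s : Finset ι) :
    ∫ ω, ∑ i ∈ s, y i ω ∂μ = 0 := by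
  rw [integral_finsetSum s fun i _ => integrable_of_abs_le (hmeas i) (hbd i)]
  exact sum_eq_zero fun i _ => hmean i

lemma integral_sum_sq_le (hmeas : ∀ i, Measurable (y i)) (hindep : iIndepFun y μ)
    (hbd : ∀ i ω, |y i ω| ≤ M) (hmean : ∀ i, ∫ ω, y i ω ∂μ = 0)
    (hvar : ∀ i, ∫ ω, y i ω ^ 2 ∂μ ≤ v) (s : Finset ι) :
    ∫ ω, (∑ i ∈ s, y i ω) ^ 2 ∂μ ≤ #s * v := by
  induction s using Finset.cons_induction with
  | empty => simp
  | cons a s ha ih =>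
    have hexp : ∫ ω, (∑ i ∈ cons a s ha, y i ω) ^ 2 ∂μ =
        ∫ ω, (∑ i ∈ s, y i ω) ^ 2 ∂μ + ∫ ω, y a ω ^ 2 ∂μ := by
      rw [integral_sum_cons_pow hmeas hindep hbd ha]
      simp [sum_range_succ, hmean a, integral_sum_eq_zero hmeas hbd hmean s]
    rw [hexp, card_cons, Nat.cast_add_one]
    linarith [hvar a]

lemma abs_integral_sum_pow_three_le (hmeas : ∀ i, Measurable (y i)) (hindep : iIndepFun y μ)
    (hbd : ∀ i ω, |y i ω| ≤ M) (hmean : ∀ i, ∫ ω, y i ω ∂μ = 0)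
    (hvar : ∀ i, ∫ ω, y i ω ^ 2 ∂μ ≤ v) (s : Finset ι) :
    |∫ ω, (∑ i ∈ s, y i ω) ^ 3 ∂μ| ≤ #s * (M * v) := by
  induction s using Finset.cons_induction with
  | empty => simp
  | cons a s ha ih =>
    have hexp : ∫ ω, (∑ i ∈ cons a s ha, y i ω) ^ 3 ∂μ =
        ∫ ω, (∑ i ∈ s, y i ω) ^ 3 ∂μ + ∫ ω, y a ω ^ 3 ∂μ := by
      rw [integral_sum_cons_pow hmeas hindep hbd ha]
      simp [sum_range_succ, Nat.choose, hmean a, integral_sum_eq_zero hmeas hbd hmean s]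
    have hX3 : |∫ ω, y a ω ^ 3 ∂μ| ≤ M * v := by
      simpa using abs_integral_pow_add_two_le (hmeas a) (hbd a) (hvar a) 1
    rw [hexp, card_cons, Nat.cast_add_one]
    linarith [abs_add_le (∫ ω, (∑ i ∈ s, y i ω) ^ 3 ∂μ) (∫ ω, y a ω ^ 3 ∂μ)]

lemma integral_sum_pow_four_le (hmeas : ∀ i, Measurable (y i)) (hindep : iIndepFun y μ)
    (hbd : ∀ i ω, |y i ω| ≤ M) (hmean : ∀ i, ∫ ω, y i ω ∂μ = 0)
    (hvar : ∀ i, ∫ ω, y i ω ^ 2 ∂μ ≤ v) (s : Finset ι) :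
    ∫ ω, (∑ i ∈ s, y i ω) ^ 4 ∂μ ≤ 3 * #s ^ 2 * v ^ 2 + #s * (M ^ 2 * v) := by
  induction s using Finset.cons_induction with
  | empty => simp
  | cons a s ha ih =>
    have hexp : ∫ ω, (∑ i ∈ cons a s ha, y i ω) ^ 4 ∂μ =
        ∫ ω, (∑ i ∈ s, y i ω) ^ 4 ∂μ
          + (∫ ω, y a ω ^ 2 ∂μ) * (∫ ω, (∑ i ∈ s, y i ω) ^ 2 ∂μ) * 6
          + ∫ ω, y a ω ^ 4 ∂μ := by
      rw [integral_sum_cons_pow hmeas hindep hbd ha]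
      simp [sum_range_succ, Nat.choose, hmean a, integral_sum_eq_zero hmeas hbd hmean s]
    have hX2 : 0 ≤ ∫ ω, y a ω ^ 2 ∂μ := integral_nonneg fun ω => sq_nonneg _
    have hT2 : 0 ≤ ∫ ω, (∑ i ∈ s, y i ω) ^ 2 ∂μ := integral_nonneg fun _ => sq_nonneg _
    have hX4 : ∫ ω, y a ω ^ 4 ∂μ ≤ M ^ 2 * v :=
      le_of_abs_le (abs_integral_pow_add_two_le (hmeas a) (hbd a) (hvar a) 2)
    have hXT := mul_le_mul (hvar a) (integral_sum_sq_le hmeas hindep hbd hmean hvar s) hT2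
      (hX2.trans (hvar a))
    have hK : (0 : ℝ) ≤ #s := Nat.cast_nonneg _
    rw [hexp, card_cons, Nat.cast_add_one]
    linarith [mul_nonneg hK (sq_nonneg v), sq_nonneg v]

lemma integral_sum_pow_six_le (hmeas : ∀ i, Measurable (y i)) (hindep : iIndepFun y μ)
    (hbd : ∀ i ω, |y i ω| ≤ M) (hmean : ∀ i, ∫ ω, y i ω ∂μ = 0)
    (hvar : ∀ i, ∫ ω, y i ω ^ 2 ∂μ ≤ v) (s : Finset ι) :
    ∫ ω, (∑ i ∈ s, y i ω) ^ 6 ∂μ ≤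
      15 * #s ^ 3 * v ^ 3 + 25 * #s ^ 2 * (M ^ 2 * v ^ 2) + #s * (M ^ 4 * v) := by
  induction s using Finset.cons_induction with
  | empty => simp
  | cons a s ha ih =>
    have hexp : ∫ ω, (∑ i ∈ cons a s ha, y i ω) ^ 6 ∂μ =
        ∫ ω, (∑ i ∈ s, y i ω) ^ 6 ∂μ
          + (∫ ω, y a ω ^ 2 ∂μ) * (∫ ω, (∑ i ∈ s, y i ω) ^ 4 ∂μ) * 15
          + (∫ ω, y a ω ^ 3 ∂μ) * (∫ ω, (∑ i ∈ s, y i ω) ^ 3 ∂μ) * 20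
          + (∫ ω, y a ω ^ 4 ∂μ) * (∫ ω, (∑ i ∈ s, y i ω) ^ 2 ∂μ) * 15
          + ∫ ω, y a ω ^ 6 ∂μ := by
      rw [integral_sum_cons_pow hmeas hindep hbd ha]
      simp [sum_range_succ, Nat.choose, hmean a, integral_sum_eq_zero hmeas hbd hmean s]
    have hM : 0 ≤ M := (abs_nonneg _).trans (hbd a (nonempty_of_isProbabilityMeasure μ).some)
    have hX2 : 0 ≤ ∫ ω, y a ω ^ 2 ∂μ := integral_nonneg fun ω => sq_nonneg _
    have hv : 0 ≤ v := hX2.trans (hvar a)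
    have hT2 : 0 ≤ ∫ ω, (∑ i ∈ s, y i ω) ^ 2 ∂μ := integral_nonneg fun _ => sq_nonneg _
    have hT4 : 0 ≤ ∫ ω, (∑ i ∈ s, y i ω) ^ 4 ∂μ := integral_nonneg fun _ => by positivity
    have hX3 : |∫ ω, y a ω ^ 3 ∂μ| ≤ M * v := by
      simpa using abs_integral_pow_add_two_le (hmeas a) (hbd a) (hvar a) 1
    have hX4 : ∫ ω, y a ω ^ 4 ∂μ ≤ M ^ 2 * v :=
      le_of_abs_le (abs_integral_pow_add_two_le (hmeas a) (hbd a) (hvar a) 2)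
    have hX6 : ∫ ω, y a ω ^ 6 ∂μ ≤ M ^ 4 * v :=
      le_of_abs_le (abs_integral_pow_add_two_le (hmeas a) (hbd a) (hvar a) 4)
    have h24 := mul_le_mul (hvar a) (integral_sum_pow_four_le hmeas hindep hbd hmean hvar s) hT4 hv
    have h33 := mul_le_mul hX3 (abs_integral_sum_pow_three_le hmeas hindep hbd hmean hvar s)
      (abs_nonneg _) (by positivity)
    have h42 := mul_le_mul hX4 (integral_sum_sq_le hmeas hindep hbd hmean hvar s) hT2
      (by positivity)
    rw [← abs_mul] at h33
    rw [hexp, card_cons, Nat.cast_add_one]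
    have hK : (0 : ℝ) ≤ #s := Nat.cast_nonneg _
    linarith [le_abs_self ((∫ ω, y a ω ^ 3 ∂μ) * ∫ ω, (∑ i ∈ s, y i ω) ^ 3 ∂μ),
      mul_nonneg hK (pow_nonneg hv 3), pow_nonneg hv 3, mul_nonneg (sq_nonneg M) (sq_nonneg v)]

end Moments

section Truncation

variable {Ω : Type*} [MeasurableSpace Ω] {μ : Measure Ω}

lemma abs_sub_integral_le [IsProbabilityMeasure μ] {Z : Ω → ℝ} (hZ : Measurable Z) {c : ℝ}
    (hZ0 : ∀ ω, 0 ≤ Z ω) (hZc : ∀ ω, Z ω ≤ c) (ω : Ω) :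
    |Z ω - ∫ ω', Z ω' ∂μ| ≤ c := by
  have hle : ∫ ω', Z ω' ∂μ ≤ c := by
    simpa using integral_mono (integrable_of_abs_le (μ := μ) hZ (C := c) fun ω => by
      rw [abs_of_nonneg (hZ0 ω)]; exact hZc ω) (integrable_const c) hZc
  have hnonneg : 0 ≤ ∫ ω', Z ω' ∂μ := integral_nonneg hZ0
  rw [abs_le]
  constructor <;> linarith [hZ0 ω, hZc ω]

lemma variance_le_mul_integral [IsProbabilityMeasure μ] {Z : Ω → ℝ} (hZ : Measurable Z)
    {c : ℝ} (hZ0 : ∀ ω, 0 ≤ Z ω) (hZc : ∀ ω, Z ω ≤ c) : Var[Z; μ] ≤ c * ∫ ω, Z ω ∂μ := by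
  have hZint : Integrable Z μ := integrable_of_abs_le hZ (C := c) fun ω => by
    rw [abs_of_nonneg (hZ0 ω)]; exact hZc ω
  refine (variance_le_expectation_sq hZ.aestronglyMeasurable).trans ?_
  rw [← integral_const_mul]
  exact integral_mono_of_nonneg (.of_forall fun ω => sq_nonneg (Z ω)) (hZint.const_mul c)
    (.of_forall fun ω => by simpa [sq] using mul_le_mul_of_nonneg_right (hZc ω) (hZ0 ω))

variable {E : Type*} [NormedAddCommGroup E]

noncomputable def truncSq (b : ℝ) (w : E) : ℝ := ‖w‖ ^ 2 * if ‖w‖ ≤ b then 1 else 0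

lemma truncSq_nonneg (b : ℝ) (w : E) : 0 ≤ truncSq b w := by
  unfold truncSq; split_ifs <;> positivity

lemma truncSq_le_sq_norm (b : ℝ) (w : E) : truncSq b w ≤ ‖w‖ ^ 2 := by
  unfold truncSq; split_ifs <;> simp

lemma truncSq_le_sq (b : ℝ) (w : E) : truncSq b w ≤ b ^ 2 := by
  unfold truncSq
  split_ifs with h
  · simpa using pow_le_pow_left₀ (norm_nonneg w) h 2
  · simpa using sq_nonneg b

lemma measurable_truncSq [MeasurableSpace E] [OpensMeasurableSpace E] (b : ℝ) :
    Measurable (truncSq (E := E) b) :=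
  (measurable_norm.pow_const 2).mul
    (Measurable.ite (measurableSet_le measurable_norm measurable_const) measurable_const
      measurable_const)

lemma integrable_truncSq_comp [IsFiniteMeasure μ] [MeasurableSpace E] [OpensMeasurableSpace E]
    {X : Ω → E} (hX : Measurable X) (b : ℝ) : Integrable (fun ω => truncSq b (X ω)) μ :=
  integrable_of_abs_le ((measurable_truncSq b).comp hX) fun ω => by
    rw [abs_of_nonneg (truncSq_nonneg _ _)]; exact truncSq_le_sq b _

lemma integral_sum_truncSq_sub_integral_pow_six_le [IsProbabilityMeasure μ] [MeasurableSpace E]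
    [OpensMeasurableSpace E] {ι : Type*} {x : ι → Ω → E} (hmeas : ∀ i, Measurable (x i))
    (hindep : iIndepFun x μ) (hint2 : ∀ i, Integrable (fun ω => ‖x i ω‖ ^ 2) μ)
    (hvar : ∀ i, ∫ ω, ‖x i ω‖ ^ 2 ∂μ ≤ 1) (b : ℝ) (s : Finset ι) :
    ∫ ω, (∑ i ∈ s, (truncSq b (x i ω) - ∫ ω', truncSq b (x i ω') ∂μ)) ^ 6 ∂μ ≤
      15 * #s ^ 3 * (b ^ 2) ^ 3 + 25 * #s ^ 2 * ((b ^ 2) ^ 2 * (b ^ 2) ^ 2)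
        + #s * ((b ^ 2) ^ 4 * b ^ 2) := by
  set z : ι → Ω → ℝ := fun i ω => truncSq b (x i ω)
  have hz_meas : ∀ i, Measurable (z i) := fun i => (measurable_truncSq b).comp (hmeas i)
  have hz_mean : ∀ i, ∫ ω, z i ω ∂μ ≤ 1 := fun i =>
    (integral_mono (integrable_truncSq_comp (hmeas i) b) (hint2 i) fun _ =>
      truncSq_le_sq_norm b _).trans (hvar i)
  have hy_var : ∀ i, ∫ ω, (z i ω - ∫ ω', z i ω' ∂μ) ^ 2 ∂μ ≤ b ^ 2 := fun i => by
    rw [← variance_eq_integral (hz_meas i).aemeasurable]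
    refine (variance_le_mul_integral (hz_meas i) (fun ω => truncSq_nonneg b _)
      (fun ω => truncSq_le_sq b _)).trans ?_
    simpa using mul_le_mul_of_nonneg_left (hz_mean i) (sq_nonneg b)
  exact integral_sum_pow_six_le (fun i => (hz_meas i).sub_const _)
    (hindep.comp (fun i w => truncSq b w - ∫ ω', z i ω' ∂μ)
      fun i => (measurable_truncSq b).sub_const _)
    (fun i => abs_sub_integral_le (hz_meas i) (fun ω => truncSq_nonneg b _)
      (fun ω => truncSq_le_sq b _))
    (fun i => by simpa [centralMoment] using centralMoment_one (X := z i) (μ := μ)) hy_var s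

end Truncation

-- `t = n` and `u = n^{3/2}`, so the right-hand side is `41 n^{-3/2}`.
lemma scaled_sixth_moment_bound_le {t u : ℝ} (ht : 1 ≤ t) (hu : 0 < u) (hut : u ^ 2 = t ^ 3) :
    (t ^ 2)⁻¹ ^ 6 * (15 * (t ^ 2) ^ 3 * u ^ 3 + 25 * (t ^ 2) ^ 2 * (u ^ 2 * u ^ 2)
      + t ^ 2 * (u ^ 4 * u)) ≤ 41 * u⁻¹ := by
  have ht0 : 0 < t := by linarith
  have hu_le : u ≤ t ^ 2 := by nlinarith
  rw [show 41 * u⁻¹ = (t ^ 2)⁻¹ ^ 6 * (41 * (t ^ 2) ^ 6 / u) by field_simp]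
  gcongr
  rw [le_div_iff₀ hu]
  have hexp : (15 * (t ^ 2) ^ 3 * u ^ 3 + 25 * (t ^ 2) ^ 2 * (u ^ 2 * u ^ 2)
      + t ^ 2 * (u ^ 4 * u)) * u = 15 * t ^ 12 + 25 * t ^ 10 * u + t ^ 11 := by
    linear_combination (15 * t ^ 6 * (u ^ 2 + t ^ 3) + 25 * t ^ 4 * u * (u ^ 2 + t ^ 3)
      + t ^ 2 * (u ^ 4 + u ^ 2 * t ^ 3 + t ^ 6)) * hut
  rw [hexp]
  linarith [pow_le_pow_right₀ ht (show 11 ≤ 12 by norm_num),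
    mul_le_mul_of_nonneg_left hu_le (pow_nonneg ht0.le 10)]

theorem stmt_8_general {Ω : Type*} [MeasureSpace Ω] [IsProbabilityMeasure (ℙ : Measure Ω)]
    (x : ℕ → ℕ → Ω → ℂ)
    (hmeas : ∀ i j, Measurable (x i j))
    (hindep : iIndepFun (fun (p : ℕ × ℕ) => x p.1 p.2) ℙ)
    (hint2 : ∀ i j, Integrable (fun ω => ‖x i j ω‖ ^ 2) ℙ)
    (hvar : ∀ i j, ∫ ω, ‖x i j ω‖ ^ 2 ∂ℙ = 1)
    (S : ℕ → Ω → ℝ)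
    (hS : ∀ n ω, S n ω = (1 / (n : ℝ) ^ 2) * ∑ i ∈ range n, ∑ j ∈ range n,
        ‖x i j ω‖ ^ 2 * (if ‖x i j ω‖ ≤ (n : ℝ) ^ ((3:ℝ)/4) then (1:ℝ) else 0)) :
    ∃ C : ℝ, ∀ n : ℕ, 1 ≤ n →
      ∫ ω, (S n ω - ∫ ω', S n ω' ∂ℙ) ^ 6 ∂ℙ ≤ C * (n : ℝ) ^ (-(3:ℝ)/2) := by
  refine ⟨41, fun n hn => ?_⟩
  set b : ℝ := (n : ℝ) ^ ((3 : ℝ) / 4)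
  set y : ℕ × ℕ → Ω → ℝ := fun p ω =>
    truncSq b (x p.1 p.2 ω) - ∫ ω', truncSq b (x p.1 p.2 ω')
  have hcenter : ∀ ω, S n ω - ∫ ω', S n ω' =
      ((n : ℝ) ^ 2)⁻¹ * ∑ p ∈ range n ×ˢ range n, y p ω := by
    have hS' : ∀ ω, S n ω =
        ((n : ℝ) ^ 2)⁻¹ * ∑ p ∈ range n ×ˢ range n, truncSq b (x p.1 p.2 ω) := fun ω => by
      rw [hS, sum_product, one_div]; rfl
    intro ω
    simp_rw [hS', integral_const_mul, integral_finsetSum _ fun (p : ℕ × ℕ) _ =>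
      integrable_truncSq_comp (hmeas p.1 p.2) b, ← mul_sub, ← sum_sub_distrib]
    rfl
  have hb : b ^ 2 = (n : ℝ) ^ ((3 : ℝ) / 2) := by
    rw [← Real.rpow_natCast, ← Real.rpow_mul (Nat.cast_nonneg n)]; norm_num
  have hb_sq : (b ^ 2) ^ 2 = (n : ℝ) ^ 3 := by
    rw [hb, ← Real.rpow_natCast, ← Real.rpow_mul (Nat.cast_nonneg n)]; norm_num
  calc ∫ ω, (S n ω - ∫ ω', S n ω') ^ 6
      = ((n : ℝ) ^ 2)⁻¹ ^ 6 * ∫ ω, (∑ p ∈ range n ×ˢ range n, y p ω) ^ 6 := by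
        simp_rw [hcenter, mul_pow]; exact integral_const_mul _ _
    _ ≤ ((n : ℝ) ^ 2)⁻¹ ^ 6 * (15 * ((n : ℝ) ^ 2) ^ 3 * (b ^ 2) ^ 3
          + 25 * ((n : ℝ) ^ 2) ^ 2 * ((b ^ 2) ^ 2 * (b ^ 2) ^ 2)
          + (n : ℝ) ^ 2 * ((b ^ 2) ^ 4 * b ^ 2)) := by
        have h6 := integral_sum_truncSq_sub_integral_pow_six_le
          (x := fun p : ℕ × ℕ => x p.1 p.2) (fun p => hmeas p.1 p.2) hindep
          (fun p => hint2 p.1 p.2) (fun p => (hvar p.1 p.2).le) b (range n ×ˢ range n)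
        rw [card_product, card_range, Nat.cast_mul, ← sq] at h6
        gcongr
    _ ≤ 41 * (b ^ 2)⁻¹ :=
        scaled_sixth_moment_bound_le (Nat.one_le_cast.mpr hn) (by positivity) hb_sq
    _ = 41 * (n : ℝ) ^ (-(3 : ℝ) / 2) := by rw [hb, neg_div, Real.rpow_neg (Nat.cast_nonneg n)]

/-- Sixth central moment bound: for `S_{n2} = n⁻² ∑_{i,j≤n} |x_{ij}|² I(|x_{ij}| ≤ n^{3/4})`
built from independent complex entries with mean 0 and unit variance,
`E[(S_{n2} − E S_{n2})⁶] = O(n^{−3/2})`. -/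
theorem stmt_8 {Ω : Type*} [MeasureSpace Ω] [IsProbabilityMeasure (ℙ : Measure Ω)]
    (x : ℕ → ℕ → Ω → ℂ)
    (hmeas : ∀ i j, Measurable (x i j))
    (hindep : iIndepFun (fun (p : ℕ × ℕ) => x p.1 p.2) ℙ)
    (hint : ∀ i j, Integrable (x i j) ℙ)
    (hmean : ∀ i j, ∫ ω, x i j ω ∂ℙ = 0)
    (hint2 : ∀ i j, Integrable (fun ω => ‖x i j ω‖ ^ 2) ℙ)
    (hvar : ∀ i j, ∫ ω, ‖x i j ω‖ ^ 2 ∂ℙ = 1)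
    (S : ℕ → Ω → ℝ)
    (hS : ∀ n ω, S n ω = (1 / (n : ℝ) ^ 2) * ∑ i ∈ range n, ∑ j ∈ range n,
        ‖x i j ω‖ ^ 2 * (if ‖x i j ω‖ ≤ (n : ℝ) ^ ((3:ℝ)/4) then (1:ℝ) else 0)) :
    ∃ C : ℝ, ∀ n : ℕ, 1 ≤ n →
      ∫ ω, (S n ω - ∫ ω', S n ω' ∂ℙ) ^ 6 ∂ℙ ≤ C * (n : ℝ) ^ (-(3:ℝ)/2) :=
  stmt_8_general x hmeas hindep hint2 hvar S hS
end

section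
/- Consider the cubic equation Δ³ + 2Δ² + ((α + 1 − |z|²)/α)Δ + 1/α = 0 in Δ, for α in the upper half plane and fixed z ∈ ℂ. Exactly one of the three analytic branches of solutions can be the Stieltjes transform of a probability measure on [0,∞); in particular, if Δ(α) is a branch that is such a Stieltjes transform, then as α → −∞ along the real axis, αΔ(α) → −1, and the product of the three branches equals −1/α while their sum equals −2. -/
/-!
By dominated convergence, the Stieltjes transform `m` of a probability measure on `[0,∞)`
satisfies `r m(r) → -1` as `r → -∞`, hence `m(r) → 0`. Vieta's formulas give
`Δ m₂ m₃ = -1/α` and `Δ + m₂ + m₃ = -2`. If a second branch were also a Stieltjes transform,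
it would tend to `0` and the third branch to `-2`, so `r Δ m₂ m₃ → (-1) · 0 · (-2) = 0`,
contradicting `r Δ m₂ m₃ = -1`.
-/

open MeasureTheory Filter Complex

/-- A measure `μ` on `[0,∞)` and a function `m` so that `m` is the Stieltjes transform
of `μ` (away from `[0,∞)`). -/
def IsStieltjesTransformOfProbOnHalfLine (m : ℂ → ℂ) : Prop :=
  ∃ μ : Measure ℝ, IsProbabilityMeasure μ ∧ μ (Set.Iio 0) = 0 ∧
    ∀ α : ℂ, (0 < α.im ∨ (α.im = 0 ∧ α.re < 0)) → m α = ∫ x : ℝ, ((x : ℂ) - α)⁻¹ ∂μ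

open Topology

theorem cubic_vieta {K : Type*} [Field K] [NeZero (2 : K)] {a b c x y u : K}
    (h : ∀ w : K, w ^ 3 + a * w ^ 2 + b * w + c = (w - x) * (w - y) * (w - u)) :
    x * y * u = -c ∧ x + y + u = -a := by
  have h₀ := h 0
  have h₁ := h 1
  have hneg := h (-1)
  refine ⟨by linear_combination h₀, ?_⟩
  have h₂ : (2 : K) * (x + y + u + a) = 0 := by linear_combination h₁ + hneg - 2 * h₀
  linear_combination (mul_eq_zero.1 h₂).resolve_left two_ne_zero

theorem tendsto_ofReal_inv_atBot : Tendsto (fun r : ℝ => (r : ℂ)⁻¹) atBot (𝓝 0) :=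
  tendsto_inv₀_cobounded.comp (RCLike.tendsto_ofReal_atBot_cobounded ℂ)

theorem tendsto_ofReal_mul_inv_sub_atBot (x : ℂ) :
    Tendsto (fun r : ℝ => (r : ℂ) * (x - r)⁻¹) atBot (𝓝 (-1)) := by
  have h : Tendsto (fun r : ℝ => (x * (r : ℂ)⁻¹ - 1)⁻¹) atBot (𝓝 (-1)) := by
    simpa using ((tendsto_ofReal_inv_atBot.const_mul x).sub_const 1).inv₀ (by norm_num)
  refine h.congr' ?_
  filter_upwards [eventually_lt_atBot 0] with r hr
  have hr : (r : ℂ) ≠ 0 := by exact_mod_cast hr.ne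
  rw [show x * (r : ℂ)⁻¹ - 1 = (x - r) * (r : ℂ)⁻¹ by field_simp, mul_inv, inv_inv, mul_comm]

theorem norm_ofReal_mul_inv_sub_le_one {x r : ℝ} (hx : 0 ≤ x) (hr : r < 0) :
    ‖(r : ℂ) * ((x : ℂ) - r)⁻¹‖ ≤ 1 := by
  have hxr : 0 < x - r := by linarith
  rw [← ofReal_sub, ← ofReal_inv, ← ofReal_mul, norm_real, Real.norm_eq_abs, abs_mul,
    abs_of_neg hr, abs_inv, abs_of_pos hxr, ← div_eq_mul_inv, div_le_one hxr]
  linarith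

namespace IsStieltjesTransformOfProbOnHalfLine

variable {m : ℂ → ℂ}

theorem tendsto_ofReal_mul_atBot (hm : IsStieltjesTransformOfProbOnHalfLine m) :
    Tendsto (fun r : ℝ => (r : ℂ) * m r) atBot (𝓝 (-1)) := by
  obtain ⟨μ, hμ, hneg, hrep⟩ := hm
  have hae : ∀ᵐ x ∂μ, 0 ≤ x := ae_iff.2 (measure_mono_null (fun _ hx => not_le.1 hx) hneg)
  have hlim : Tendsto (fun r : ℝ => ∫ x, (r : ℂ) * ((x : ℂ) - r)⁻¹ ∂μ) atBot
      (𝓝 (∫ _ : ℝ, (-1 : ℂ) ∂μ)) :=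
    tendsto_integral_filter_of_dominated_convergence (fun _ => 1)
      (Eventually.of_forall fun r => by fun_prop)
      (by
        filter_upwards [eventually_lt_atBot 0] with r hr
        filter_upwards [hae] with x hx using norm_ofReal_mul_inv_sub_le_one hx hr)
      (integrable_const 1)
      (ae_of_all _ fun x => tendsto_ofReal_mul_inv_sub_atBot x)
  rw [integral_const, probReal_univ, one_smul] at hlim
  refine hlim.congr' ?_
  filter_upwards [eventually_lt_atBot 0] with r hr
  rw [hrep r (Or.inr ⟨ofReal_im r, hr⟩), integral_const_mul]

theorem tendsto_atBot (hm : IsStieltjesTransformOfProbOnHalfLine m) :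
    Tendsto (fun r : ℝ => m r) atBot (𝓝 0) := by
  have h := tendsto_ofReal_inv_atBot.mul hm.tendsto_ofReal_mul_atBot
  rw [zero_mul] at h
  refine h.congr' ?_
  filter_upwards [eventually_lt_atBot 0] with r hr
  have hr : (r : ℂ) ≠ 0 := by exact_mod_cast hr.ne
  rw [inv_mul_cancel_left₀ hr]

end IsStieltjesTransformOfProbOnHalfLine

theorem not_isStieltjesTransformOfProbOnHalfLine_of_vieta {f g h : ℂ → ℂ}
    (hf : IsStieltjesTransformOfProbOnHalfLine f)
    (hprod : ∀ᶠ r : ℝ in atBot, (r : ℂ) * (f r * g r * h r) = -1)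
    (hsum : ∀ᶠ r : ℝ in atBot, f r + g r + h r = -2) :
    ¬ IsStieltjesTransformOfProbOnHalfLine g := by
  intro hg
  have hh : Tendsto (fun r : ℝ => h r) atBot (𝓝 (-2 - 0 - 0)) :=
    ((tendsto_const_nhds.sub hf.tendsto_atBot).sub hg.tendsto_atBot).congr'
      (hsum.mono fun r hr => by linear_combination -hr)
  have hzero : Tendsto (fun r : ℝ => (r : ℂ) * (f r * g r * h r)) atBot
      (𝓝 (-1 * 0 * (-2 - 0 - 0))) :=
    ((hf.tendsto_ofReal_mul_atBot.mul hg.tendsto_atBot).mul hh).congr fun r => by ring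
  have hone : Tendsto (fun r : ℝ => (r : ℂ) * (f r * g r * h r)) atBot (𝓝 (-1)) :=
    tendsto_const_nhds.congr' (hprod.mono fun r hr => hr.symm)
  have := tendsto_nhds_unique hzero hone
  norm_num at this

theorem stmt_13_general (z : ℂ) (Δ m₂ m₃ : ℂ → ℂ)
    (hfactor : ∀ α : ℂ, α ≠ 0 → ∀ w : ℂ,
      w ^ 3 + 2 * w ^ 2 + ((α + 1 - ((‖z‖ : ℝ) : ℂ) ^ 2) / α) * w + 1 / α
        = (w - Δ α) * (w - m₂ α) * (w - m₃ α))
    (hΔ : IsStieltjesTransformOfProbOnHalfLine Δ) :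
    Tendsto (fun r : ℝ => (r : ℂ) * Δ r) atBot (nhds (-1)) ∧
    (∀ α : ℂ, α ≠ 0 → Δ α * m₂ α * m₃ α = -1 / α ∧ Δ α + m₂ α + m₃ α = -2) ∧
    ¬ IsStieltjesTransformOfProbOnHalfLine m₂ ∧
    ¬ IsStieltjesTransformOfProbOnHalfLine m₃ := by
  have vieta (α : ℂ) (hα : α ≠ 0) :
      Δ α * m₂ α * m₃ α = -1 / α ∧ Δ α + m₂ α + m₃ α = -2 := by
    simpa only [neg_div] using cubic_vieta (hfactor α hα)
  have hvieta : ∀ᶠ r : ℝ in atBot,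
      (r : ℂ) * (Δ r * m₂ r * m₃ r) = -1 ∧ Δ r + m₂ r + m₃ r = -2 := by
    filter_upwards [eventually_lt_atBot 0] with r hr
    have hr : (r : ℂ) ≠ 0 := by exact_mod_cast hr.ne
    obtain ⟨hprod, hsum⟩ := vieta r hr
    exact ⟨by rw [hprod, mul_div_cancel₀ _ hr], hsum⟩
  refine ⟨hΔ.tendsto_ofReal_mul_atBot, vieta, ?_, ?_⟩
  · exact not_isStieltjesTransformOfProbOnHalfLine_of_vieta hΔ
      (hvieta.mono fun _ h => h.1) (hvieta.mono fun _ h => h.2)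
  · exact not_isStieltjesTransformOfProbOnHalfLine_of_vieta (g := m₃) (h := m₂) hΔ
      (hvieta.mono fun _ h => by linear_combination h.1)
      (hvieta.mono fun _ h => by linear_combination h.2)

/-- For the cubic `Δ³ + 2Δ² + ((α+1−|z|²)/α)Δ + 1/α = 0`: if `Δ, m₂, m₃` are its three
branches of solutions (i.e. the cubic factors through them) and `Δ` is the branch that is
the Stieltjes transform of a probability measure on `[0,∞)`, then `αΔ(α) → −1` as
`α → −∞` along the real axis, the product of the three branches is `−1/α`, their sum is
`−2`, and neither `m₂` nor `m₃` is such a Stieltjes transform (so exactly one branch is). -/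
theorem stmt_13 (z : ℂ) (Δ m₂ m₃ : ℂ → ℂ)
    (hfactor : ∀ α : ℂ, α ≠ 0 → ∀ w : ℂ,
      w ^ 3 + 2 * w ^ 2 + ((α + 1 - ((‖z‖ : ℝ) : ℂ) ^ 2) / α) * w + 1 / α
        = (w - Δ α) * (w - m₂ α) * (w - m₃ α))
    (hdistinct : ∀ α : ℂ, 0 < α.im → Δ α ≠ m₂ α ∧ Δ α ≠ m₃ α ∧ m₂ α ≠ m₃ α)
    (hΔ : IsStieltjesTransformOfProbOnHalfLine Δ) :
    Tendsto (fun r : ℝ => (r : ℂ) * Δ r) atBot (nhds (-1)) ∧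
    (∀ α : ℂ, α ≠ 0 → Δ α * m₂ α * m₃ α = -1 / α ∧ Δ α + m₂ α + m₃ α = -2) ∧
    ¬ IsStieltjesTransformOfProbOnHalfLine m₂ ∧
    ¬ IsStieltjesTransformOfProbOnHalfLine m₃ :=
  stmt_13_general z Δ m₂ m₃ hfactor hΔ
end

section
/- Let λ_1,...,λ_n be complex numbers, z = s + it, ν_n(·, z) the empirical distribution of the values |λ_k − z|², and T ⊂ ℝ² any measurable set. Then for any ε > 0, ∫∫_T |∂/∂s ∫_0^{ε²} ln x ν_n(dx, z)| ds dt ≤ (2/n) Σ_{k=1}^n ∫∫_{|λ_k − z| ≤ ε} |λ_{kr} − s| / ((λ_{kr} − s)² + (λ_{ki} − t)²) ds dt = 8ε. -/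
/-!
In polar coordinates about `λ_k`, the kernel `|x| / (x² + y²)` on the disk of radius `ε` becomes
`|cos θ|`, the Jacobian `r` cancelling the singularity `1 / r`; hence its integral is
`ε · ∫_{-π}^{π} |cos θ| dθ = 4ε`. The integrand on the left is pointwise at most `2 / n` times the
sum of these nonnegative kernels, so enlarging `T` to the whole plane gives the bound.
-/

open MeasureTheory Finset Set Real

theorem integral_abs_cos_Ioo_neg_pi_pi : ∫ θ in Ioo (-π) π, |cos θ| = 4 := by
  have hper : Function.Periodic (fun θ => |cos θ|) π := fun θ => by simp [cos_add_pi]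
  have hint (a b : ℝ) : IntervalIntegrable (fun θ => |cos θ|) volume a b :=
    continuous_cos.abs.intervalIntegrable a b
  have hhalf : ∫ θ in (-(π / 2))..(-(π / 2) + π), |cos θ| = 2 := by
    rw [show -(π / 2) + π = π / 2 by ring,
      intervalIntegral.integral_congr fun θ hθ => abs_of_nonneg (cos_nonneg_of_mem_Icc
        (by rwa [Set.uIcc_of_le (by linarith [pi_pos])] at hθ)), integral_cos]
    norm_num
  rw [← integral_Ioc_eq_integral_Ioo, ← intervalIntegral.integral_of_le (by linarith [pi_pos])]
  calc ∫ θ in (-π)..π, |cos θ| = ∫ θ in (-π)..(-π + (2 : ℤ) • π), |cos θ| := by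
        congr 1; norm_num; ring
    _ = 2 * ∫ θ in (-π)..(-π + π), |cos θ| := by
      rw [hper.intervalIntegral_add_zsmul_eq 2 _ hint]; norm_num
    _ = 4 := by rw [hper.intervalIntegral_add_eq _ (-(π / 2)), hhalf]; norm_num

theorem integral_Ioi_indicator_Iic_one {ε : ℝ} (hε : 0 ≤ ε) :
    ∫ r in Ioi (0 : ℝ), (Iic ε).indicator 1 r = ε := by
  rw [setIntegral_indicator measurableSet_Iic, Ioi_inter_Iic]
  simp [hε]

theorem polarCoord_smul_indicator_disk {ε : ℝ} (hε : 0 ≤ ε) {p : ℝ × ℝ}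
    (hp : p ∈ polarCoord.target) :
    p.1 • {q : ℝ × ℝ | q.1 ^ 2 + q.2 ^ 2 ≤ ε ^ 2}.indicator
        (fun q => |q.1| / (q.1 ^ 2 + q.2 ^ 2)) (polarCoord.symm p) =
      (Iic ε).indicator 1 p.1 * |cos p.2| := by
  obtain ⟨r, θ⟩ := p
  have hr : 0 < r := hp.1
  have hsq : (r * cos θ) ^ 2 + (r * sin θ) ^ 2 = r ^ 2 := by
    linear_combination r ^ 2 * cos_sq_add_sin_sq θ
  simp only [polarCoord_symm_apply, indicator_apply, mem_ofPred_eq, Set.mem_Iic, hsq,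
    sq_le_sq₀ hr.le hε]
  split_ifs
  · rw [abs_mul, abs_of_pos hr, smul_eq_mul, Pi.one_apply]
    field_simp
  · simp

theorem integral_indicator_disk_abs_fst_div {ε : ℝ} (hε : 0 ≤ ε) :
    ∫ q, {q : ℝ × ℝ | q.1 ^ 2 + q.2 ^ 2 ≤ ε ^ 2}.indicator
      (fun q => |q.1| / (q.1 ^ 2 + q.2 ^ 2)) q = 4 * ε := by
  rw [← integral_comp_polarCoord_symm,
    setIntegral_congr_fun polarCoord.open_target.measurableSet
      fun p hp => polarCoord_smul_indicator_disk hε hp,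
    polarCoord_target, Measure.volume_eq_prod,
    setIntegral_prod_mul ((Iic ε).indicator 1) (fun θ => |cos θ|),
    integral_Ioi_indicator_Iic_one hε, integral_abs_cos_Ioo_neg_pi_pi, mul_comm]

theorem indicator_disk_eq_comp_sub (a b ε : ℝ) :
    {p : ℝ × ℝ | (a - p.1) ^ 2 + (b - p.2) ^ 2 ≤ ε ^ 2}.indicator
        (fun p => |a - p.1| / ((a - p.1) ^ 2 + (b - p.2) ^ 2)) =
      fun p => {q : ℝ × ℝ | q.1 ^ 2 + q.2 ^ 2 ≤ ε ^ 2}.indicator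
        (fun q => |q.1| / (q.1 ^ 2 + q.2 ^ 2)) ((a, b) - p) :=
  rfl

theorem measurableSet_disk (a b ε : ℝ) :
    MeasurableSet {p : ℝ × ℝ | (a - p.1) ^ 2 + (b - p.2) ^ 2 ≤ ε ^ 2} := by
  apply measurableSet_le <;> fun_prop

theorem integrableOn_disk_abs_sub_div (a b : ℝ) {ε : ℝ} (hε : 0 < ε) :
    IntegrableOn (fun p : ℝ × ℝ => |a - p.1| / ((a - p.1) ^ 2 + (b - p.2) ^ 2))
      {p : ℝ × ℝ | (a - p.1) ^ 2 + (b - p.2) ^ 2 ≤ ε ^ 2} := by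
  have h0 : Integrable ({q : ℝ × ℝ | q.1 ^ 2 + q.2 ^ 2 ≤ ε ^ 2}.indicator
      (fun q => |q.1| / (q.1 ^ 2 + q.2 ^ 2))) := by
    -- a non-integrable function has integral `0`
    refine Integrable.of_integral_ne_zero ?_
    rw [integral_indicator_disk_abs_fst_div hε.le]
    positivity
  rw [← integrable_indicator_iff (measurableSet_disk a b ε), indicator_disk_eq_comp_sub]
  exact h0.comp_sub_left (a, b)

theorem integral_disk_abs_sub_div (a b : ℝ) {ε : ℝ} (hε : 0 ≤ ε) :
    ∫ p : ℝ × ℝ in {p : ℝ × ℝ | (a - p.1) ^ 2 + (b - p.2) ^ 2 ≤ ε ^ 2},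
      |a - p.1| / ((a - p.1) ^ 2 + (b - p.2) ^ 2) = 4 * ε := by
  rw [← integral_indicator (measurableSet_disk a b ε), indicator_disk_eq_comp_sub,
    integral_sub_left_eq_self, integral_indicator_disk_abs_fst_div hε]

theorem abs_ite_two_mul_div_eq_indicator (a b ε : ℝ) (p : ℝ × ℝ) :
    |if (a - p.1) ^ 2 + (b - p.2) ^ 2 ≤ ε ^ 2
        then 2 * (p.1 - a) / ((a - p.1) ^ 2 + (b - p.2) ^ 2) else 0| =
      2 * {p : ℝ × ℝ | (a - p.1) ^ 2 + (b - p.2) ^ 2 ≤ ε ^ 2}.indicator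
        (fun p => |a - p.1| / ((a - p.1) ^ 2 + (b - p.2) ^ 2)) p := by
  simp only [indicator_apply, mem_ofPred_eq]
  split_ifs
  · rw [abs_div, abs_mul, abs_two, abs_sub_comm,
      abs_of_nonneg (add_nonneg (sq_nonneg (a - p.1)) (sq_nonneg (b - p.2))), mul_div_assoc]
  · simp

theorem setIntegral_abs_le_integral {α : Type*} [MeasurableSpace α] {μ : Measure α}
    {f g : α → ℝ} (s : Set α) (hg : Integrable g μ) (hfg : ∀ x, |f x| ≤ g x) :
    ∫ x in s, |f x| ∂μ ≤ ∫ x, g x ∂μ :=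
  (integral_mono_of_nonneg (ae_of_all _ fun _ => abs_nonneg _) hg.integrableOn
    (ae_of_all _ hfg)).trans
    (setIntegral_le_integral hg (ae_of_all _ fun x => (abs_nonneg _).trans (hfg x)))

theorem stmt_15_general {n : ℕ} (hn : 1 ≤ n) (l : Fin n → ℂ) (T : Set (ℝ × ℝ))
    (ε : ℝ) (hε : 0 < ε) :
    (∫ p : ℝ × ℝ in T,
        |(1 / (n : ℝ)) * ∑ k, (if ((l k).re - p.1) ^ 2 + ((l k).im - p.2) ^ 2 ≤ ε ^ 2
            then 2 * (p.1 - (l k).re) / (((l k).re - p.1) ^ 2 + ((l k).im - p.2) ^ 2)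
            else 0)|
      ≤ (2 / (n : ℝ)) * ∑ k,
        ∫ p : ℝ × ℝ in {p : ℝ × ℝ | ((l k).re - p.1) ^ 2 + ((l k).im - p.2) ^ 2 ≤ ε ^ 2},
          |(l k).re - p.1| / (((l k).re - p.1) ^ 2 + ((l k).im - p.2) ^ 2)) ∧
    (2 / (n : ℝ)) * ∑ k,
        ∫ p : ℝ × ℝ in {p : ℝ × ℝ | ((l k).re - p.1) ^ 2 + ((l k).im - p.2) ^ 2 ≤ ε ^ 2},
          |(l k).re - p.1| / (((l k).re - p.1) ^ 2 + ((l k).im - p.2) ^ 2)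
      = 8 * ε := by
  set F : Fin n → ℝ × ℝ → ℝ := fun k =>
    {p : ℝ × ℝ | ((l k).re - p.1) ^ 2 + ((l k).im - p.2) ^ 2 ≤ ε ^ 2}.indicator
      fun p => |(l k).re - p.1| / (((l k).re - p.1) ^ 2 + ((l k).im - p.2) ^ 2)
  have hF : ∀ k, Integrable (F k) := fun k =>
    (integrable_indicator_iff (measurableSet_disk _ _ _)).2
      (integrableOn_disk_abs_sub_div _ _ hε)
  refine ⟨?_, ?_⟩
  · calc _ ≤ ∫ p, 2 / (n : ℝ) * ∑ k, F k p := by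
          refine setIntegral_abs_le_integral T
            ((integrable_finsetSum _ fun k _ => hF k).const_mul _) fun p => ?_
          calc _ = 1 / (n : ℝ) * |∑ k, _| := by rw [abs_mul, abs_of_nonneg (by positivity)]
            _ ≤ 1 / (n : ℝ) * ∑ k, 2 * F k p := by
              gcongr
              exact (abs_sum_le_sum_abs _ _).trans_eq
                (sum_congr rfl fun k _ => abs_ite_two_mul_div_eq_indicator _ _ _ _)
            _ = _ := by rw [← mul_sum]; ring
      _ = _ := by
          rw [integral_const_mul, integral_finsetSum _ fun k _ => hF k]
          simp_rw [F, integral_indicator (measurableSet_disk _ _ _)]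
  · have hn0 : (n : ℝ) ≠ 0 := Nat.cast_ne_zero.2 (by omega)
    simp only [integral_disk_abs_sub_div _ _ hε.le, sum_const, card_univ, Fintype.card_fin,
      nsmul_eq_mul]
    field_simp
    ring

/-- Bound (4.9) of Step III: with `z = s+it`, `λ_k = λ_{kr} + iλ_{ki}`, and
`∂/∂s ∫₀^{ε²} ln x ν_n(dx,z) = n⁻¹ ∑_k 2(s−λ_{kr})/|λ_k−z|² I(|λ_k−z| ≤ ε)`,
the integral over any measurable `T ⊆ ℝ²` of its absolute value is bounded by
`(2/n) ∑_k ∫∫_{|λ_k−z|≤ε} |λ_{kr}−s|/((λ_{kr}−s)²+(λ_{ki}−t)²) ds dt`, which equals `8ε`. -/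
theorem stmt_15 {n : ℕ} (hn : 1 ≤ n) (l : Fin n → ℂ) (T : Set (ℝ × ℝ))
    (hT : MeasurableSet T) (ε : ℝ) (hε : 0 < ε) :
    (∫ p : ℝ × ℝ in T,
        |(1 / (n : ℝ)) * ∑ k, (if ((l k).re - p.1) ^ 2 + ((l k).im - p.2) ^ 2 ≤ ε ^ 2
            then 2 * (p.1 - (l k).re) / (((l k).re - p.1) ^ 2 + ((l k).im - p.2) ^ 2)
            else 0)|
      ≤ (2 / (n : ℝ)) * ∑ k,
        ∫ p : ℝ × ℝ in {p : ℝ × ℝ | ((l k).re - p.1) ^ 2 + ((l k).im - p.2) ^ 2 ≤ ε ^ 2},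
          |(l k).re - p.1| / (((l k).re - p.1) ^ 2 + ((l k).im - p.2) ^ 2)) ∧
    (2 / (n : ℝ)) * ∑ k,
        ∫ p : ℝ × ℝ in {p : ℝ × ℝ | ((l k).re - p.1) ^ 2 + ((l k).im - p.2) ^ 2 ≤ ε ^ 2},
          |(l k).re - p.1| / (((l k).re - p.1) ^ 2 + ((l k).im - p.2) ^ 2)
      = 8 * ε :=
  stmt_15_general hn l T ε hε
end

section
/- Let μ be the uniform distribution on the unit disk {λ ∈ ℂ : |λ| ≤ 1}, and for z = s+it let ν(·,z) be the pushforward of μ under λ ↦ |λ − z|². Then for every ε > 0 and every bounded measurable region T ⊂ ℝ², ∫∫_T |∂/∂s ∫_0^{ε²} ln x ν(dx, z)| dt ds ≤ 8ε. -/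
/-!
Bound `|∫ f|` by `∫ |f|`, enlarge `T` to the whole plane and swap the two integrations
(Tonelli). For each `λ` of the unit disk, the inner integral over `z` is by translation
invariance `∫_{|w| ≤ ε} |Re w| / |w|² dw`, which in polar coordinates is
`∫₀^ε ∫_{-π}^{π} |cos θ| dθ dr = 4ε`. The disk has area `π`, so the total is
`(2/π) · π · 4ε = 8ε`.
-/

open MeasureTheory Real Set Metric
open scoped ENNReal

theorem integral_abs_cos_neg_pi_pi : ∫ θ in (-π)..π, |cos θ| = 4 := by
  have hper : Function.Periodic (fun θ => |cos θ|) π := fun θ => by simp [cos_add_pi]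
  have hhalf : ∀ t, ∫ θ in t..t + π, |cos θ| = 2 := fun t => by
    rw [hper.intervalIntegral_add_eq t (-(π / 2)), show -(π / 2) + π = π / 2 by ring,
      intervalIntegral.integral_congr (g := cos) fun θ hθ => abs_of_nonneg
        (cos_nonneg_of_mem_Icc (by rwa [uIcc_of_le (by linarith [pi_pos])] at hθ)),
      integral_cos]
    norm_num
  have hint : ∀ a b : ℝ, IntervalIntegrable (fun θ => |cos θ|) volume a b := fun a b =>
    continuous_cos.abs.intervalIntegrable a b
  have hleft : ∫ θ in (-π)..0, |cos θ| = 2 := by simpa using hhalf (-π)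
  have hright : ∫ θ in 0..π, |cos θ| = 2 := by simpa using hhalf 0
  rw [← intervalIntegral.integral_add_adjacent_intervals (hint _ 0) (hint 0 _), hleft, hright]
  norm_num

theorem lintegral_abs_cos_Ioo_neg_pi_pi : ∫⁻ θ in Ioo (-π) π, ENNReal.ofReal |cos θ| = ENNReal.ofReal 4 := by
  rw [← ofReal_integral_eq_lintegral_ofReal (continuous_cos.abs.integrableOn_Icc.mono_set
      Ioo_subset_Icc_self) (.of_forall fun _ => abs_nonneg _),
    ← integral_Ioc_eq_integral_Ioo, ← intervalIntegral.integral_of_le (by linarith [pi_pos]),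
    integral_abs_cos_neg_pi_pi]

theorem lintegral_lintegral_inter_closedBall_sub {E : Type*} [NormedAddCommGroup E]
    [MeasurableSpace E] [BorelSpace E] [SecondCountableTopology E] {μ : Measure E} [SFinite μ]
    [μ.IsAddRightInvariant] (D : Set E) (ε : ℝ) {K : E → ℝ≥0∞} (hK : Measurable K) :
    ∫⁻ z, ∫⁻ l in D ∩ closedBall z ε, K (z - l) ∂μ ∂μ = μ D * ∫⁻ w in closedBall 0 ε, K w ∂μ := by
  set G := (closedBall (0 : E) ε).indicator K
  have hG : Measurable G := hK.indicator measurableSet_closedBall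
  have hinner : ∀ z, ∫⁻ l in D ∩ closedBall z ε, K (z - l) ∂μ = ∫⁻ l in D, G (z - l) ∂μ :=
    fun z => by
      classical
      rw [inter_comm, ← Measure.restrict_restrict measurableSet_closedBall,
        ← lintegral_indicator measurableSet_closedBall]
      congr! 2 with l
      simp only [G, indicator_apply, mem_closedBall', dist_eq_norm, zero_sub, norm_neg]
  calc ∫⁻ z, ∫⁻ l in D ∩ closedBall z ε, K (z - l) ∂μ ∂μ
      = ∫⁻ z, ∫⁻ l in D, G (z - l) ∂μ ∂μ := lintegral_congr fun z => hinner z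
    _ = ∫⁻ l in D, ∫⁻ z, G (z - l) ∂μ ∂μ :=
        lintegral_lintegral_swap (hG.comp (measurable_fst.sub measurable_snd)).aemeasurable
    _ = ∫⁻ l in D, ∫⁻ w in closedBall 0 ε, K w ∂μ ∂μ := by
        simp_rw [lintegral_sub_right_eq_self G, G, lintegral_indicator measurableSet_closedBall]
    _ = μ D * ∫⁻ w in closedBall 0 ε, K w ∂μ := by rw [setLIntegral_const, mul_comm]

theorem lintegral_closedBall_abs_re_div_sq_norm {ε : ℝ} (hε : 0 ≤ ε) :
    ∫⁻ w in closedBall (0 : ℂ) ε, ENNReal.ofReal (|w.re| / ‖w‖ ^ 2) = ENNReal.ofReal (4 * ε) := by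
  have hpolar : ∀ p ∈ polarCoord.target, ENNReal.ofReal p.1 •
      (closedBall (0 : ℂ) ε).indicator (fun w => ENNReal.ofReal (|w.re| / ‖w‖ ^ 2))
        (Complex.polarCoord.symm p) = (Iic ε).indicator 1 p.1 * ENNReal.ofReal |cos p.2| := by
    classical
    rintro ⟨r, θ⟩ ⟨hr : 0 < r, -⟩
    have hnorm : ‖Complex.polarCoord.symm (r, θ)‖ = r := by
      rw [Complex.norm_polarCoord_symm, abs_of_pos hr]
    have hre : (Complex.polarCoord.symm (r, θ)).re = r * cos θ := by
      simp [Complex.cos_ofReal_re]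
    simp only [indicator_apply, mem_closedBall_zero_iff, hnorm, hre, mem_Iic]
    split_ifs
    · rw [smul_eq_mul, ← ENNReal.ofReal_mul hr.le, Pi.one_apply, one_mul, abs_mul, abs_of_pos hr]
      congr 1
      field_simp
    · simp
  rw [← lintegral_indicator measurableSet_closedBall, ← Complex.lintegral_comp_polarCoord_symm,
    setLIntegral_congr_fun polarCoord.open_target.measurableSet hpolar, polarCoord_target,
    Measure.volume_eq_prod, ← Measure.prod_restrict, lintegral_prod_mul (f := (Iic ε).indicator 1)
      (g := fun θ => ENNReal.ofReal |cos θ|)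
      (measurable_const.indicator measurableSet_Iic).aemeasurable (by fun_prop),
    lintegral_abs_cos_Ioo_neg_pi_pi, lintegral_indicator_one measurableSet_Iic,
    Measure.restrict_apply measurableSet_Iic, Iic_inter_Ioi, Real.volume_Ioc, sub_zero,
    ← ENNReal.ofReal_mul hε, mul_comm]

/-- `∂/∂s ∫₀^{ε²} ln x ν(dx, z)` at `z = s + it`, written as the integral over `λ`. -/
noncomputable def truncLogPotentialDeriv (ε : ℝ) (z : ℂ) : ℝ :=
  (2 / π) * ∫ l in closedBall 0 1 ∩ closedBall z ε, (z - l).re / ‖z - l‖ ^ 2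

theorem ofReal_abs_truncLogPotentialDeriv_le (ε : ℝ) (z : ℂ) :
    ENNReal.ofReal |truncLogPotentialDeriv ε z| ≤ ENNReal.ofReal (2 / π) *
      ∫⁻ l in closedBall 0 1 ∩ closedBall z ε, ENNReal.ofReal (|(z - l).re| / ‖z - l‖ ^ 2) := by
  rw [truncLogPotentialDeriv, abs_mul, abs_of_pos (show 0 < 2 / π by positivity),
    ENNReal.ofReal_mul (by positivity), ← Real.enorm_eq_ofReal_abs]
  gcongr
  refine (enorm_integral_le_lintegral_enorm _).trans_eq (lintegral_congr fun l => ?_)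
  rw [Real.enorm_eq_ofReal_abs, abs_div, abs_of_nonneg (sq_nonneg ‖z - l‖)]

theorem lintegral_abs_truncLogPotentialDeriv_le {ε : ℝ} (hε : 0 ≤ ε) :
    ∫⁻ z, ENNReal.ofReal |truncLogPotentialDeriv ε z| ≤ ENNReal.ofReal (8 * ε) := by
  have hK : Measurable fun w : ℂ => ENNReal.ofReal (|w.re| / ‖w‖ ^ 2) := by fun_prop
  calc ∫⁻ z, ENNReal.ofReal |truncLogPotentialDeriv ε z|
      ≤ ∫⁻ z, ENNReal.ofReal (2 / π) * ∫⁻ l in closedBall 0 1 ∩ closedBall z ε,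
          ENNReal.ofReal (|(z - l).re| / ‖z - l‖ ^ 2) :=
        lintegral_mono fun z => ofReal_abs_truncLogPotentialDeriv_le ε z
    _ = ENNReal.ofReal (2 / π) * (volume (closedBall (0 : ℂ) 1) * ENNReal.ofReal (4 * ε)) := by
        rw [lintegral_const_mul' _ _ ENNReal.ofReal_ne_top,
          lintegral_lintegral_inter_closedBall_sub _ _ hK,
          lintegral_closedBall_abs_re_div_sq_norm hε]
    _ = ENNReal.ofReal (8 * ε) := by
        rw [Complex.volume_closedBall, ENNReal.ofReal_one, one_pow, one_mul,
          ← ENNReal.ofReal_coe_nnreal, NNReal.coe_real_pi, ← ENNReal.ofReal_mul pi_pos.le,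
          ← ENNReal.ofReal_mul (by positivity)]
        congr 1
        field_simp
        ring

theorem truncLogPotentialDeriv_mk (ε : ℝ) (p : ℝ × ℝ) :
    truncLogPotentialDeriv ε ⟨p.1, p.2⟩ = (2 / π) *
      ∫ l : ℂ in {l : ℂ | ‖l‖ ≤ 1 ∧ ‖l - ((p.1 : ℂ) + p.2 * Complex.I)‖ ≤ ε},
        (p.1 - l.re) / ((p.1 - l.re) ^ 2 + (p.2 - l.im) ^ 2) := by
  have hset : {l : ℂ | ‖l‖ ≤ 1 ∧ ‖l - ((p.1 : ℂ) + p.2 * Complex.I)‖ ≤ ε} =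
      closedBall 0 1 ∩ closedBall ⟨p.1, p.2⟩ ε := by
    ext l
    simp [Complex.mk_eq_add_mul_I, dist_eq_norm]
  rw [truncLogPotentialDeriv, hset]
  congr! 3 with l
  rw [Complex.sq_norm, Complex.normSq_apply]
  simp only [Complex.sub_re, Complex.sub_im]
  ring

theorem stmt_16_general (ε : ℝ) (hε : 0 < ε) (T : Set (ℝ × ℝ)) :
    ∫ p : ℝ × ℝ in T,
        |(2 / Real.pi) *
          ∫ l : ℂ in {l : ℂ | ‖l‖ ≤ 1 ∧
              ‖l - ((p.1 : ℂ) + p.2 * Complex.I)‖ ≤ ε},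
            (p.1 - l.re) / ((p.1 - l.re) ^ 2 + (p.2 - l.im) ^ 2)|
      ≤ 8 * ε := by
  simp_rw [← truncLogPotentialDeriv_mk]
  set f := fun z => ENNReal.ofReal |truncLogPotentialDeriv ε z|
  have hplane : ∫⁻ p : ℝ × ℝ, f ⟨p.1, p.2⟩ = ∫⁻ z, f z :=
    Complex.volume_preserving_equiv_real_prod.symm.lintegral_comp_emb
      Complex.measurableEquivRealProd.symm.measurableEmbedding f
  refine (Real.le_norm_self _).trans ((norm_integral_le_lintegral_norm _).trans
    (ENNReal.toReal_le_of_le_ofReal (by positivity) ?_))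
  calc ∫⁻ p in T, ENNReal.ofReal ‖|truncLogPotentialDeriv ε ⟨p.1, p.2⟩|‖
      ≤ ∫⁻ p : ℝ × ℝ, f ⟨p.1, p.2⟩ := by
        simpa only [Real.norm_eq_abs, abs_abs] using setLIntegral_le_lintegral T _
    _ ≤ ENNReal.ofReal (8 * ε) := hplane ▸ lintegral_abs_truncLogPotentialDeriv_le hε.le

/-- For the uniform distribution on the unit disk, with
`∂/∂s ∫₀^{ε²} ln x ν(dx,z) = (2/π) ∫∫_{|λ|≤1, |λ−z|≤ε} (s−λ_r)/|λ−z|² dλ_r dλ_i`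
(`z = s+it`), the integral of its absolute value over any bounded measurable region
`T ⊆ ℝ²` is at most `8ε`. -/
theorem stmt_16 (ε : ℝ) (hε : 0 < ε) (T : Set (ℝ × ℝ)) (hT : MeasurableSet T)
    (hTb : Bornology.IsBounded T) :
    ∫ p : ℝ × ℝ in T,
        |(2 / Real.pi) *
          ∫ l : ℂ in {l : ℂ | ‖l‖ ≤ 1 ∧
              ‖l - ((p.1 : ℂ) + p.2 * Complex.I)‖ ≤ ε},
            (p.1 - l.re) / ((p.1 - l.re) ^ 2 + (p.2 - l.im) ^ 2)|
      ≤ 8 * ε :=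
  stmt_16_general ε hε T
end
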